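/- arXiv:2311.06987 — 3 statements merged into one kernel-verified Lean document; each statement's English description precedes it below -/
import Mathlib

section
/- Let H and V be real Hilbert spaces and let ι : V → H be a continuous injective linear map. Then for every η⁰ ∈ V, v⁰ ∈ H and Δt > 0 there exists a unique pair (η½, v½) ∈ V × V such that η½ = η⁰ + Δt · v½ and ⟨ι v½ − v⁰, ι ψ⟩_H + Δt · ⟨η½, ψ⟩_V = 0 for all ψ ∈ V. -/
/-!
Eliminating `η½ = η⁰ + Δt • v½` leaves a single variational equation for `v½`, with the bilinear
form `B u ψ = ⟪ι u, ι ψ⟫ + Δt² ⟪u, ψ⟫` on the left and the functional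
`ψ ↦ ⟪v⁰, ι ψ⟫ - Δt ⟪η⁰, ψ⟫` on the right. Since `B u u ≥ Δt² ‖u‖²`, the form is coercive, and
the Lax–Milgram theorem gives exactly one solution.
-/

open RealInnerProductSpace

theorem existsUnique_prod_fst_eq_iff {α β : Type*} (g : β → α) (P : α → β → Prop) :
    (∃! p : α × β, p.1 = g p.2 ∧ P p.1 p.2) ↔ ∃! b, P (g b) b := by
  constructor
  · rintro ⟨⟨a, b⟩, ⟨ha, hP⟩, huniq⟩
    dsimp only at ha hP
    subst ha
    exact ⟨b, hP, fun b' hb' => congrArg Prod.snd (huniq (g b', b') ⟨rfl, hb'⟩)⟩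
  · rintro ⟨b, hP, huniq⟩
    refine ⟨(g b, b), ⟨rfl, hP⟩, ?_⟩
    rintro ⟨a', b'⟩ ⟨ha', hb'⟩
    dsimp only at ha' hb'
    subst ha'
    rw [huniq b' hb']

section LaxMilgram

variable {V : Type*} [NormedAddCommGroup V] [InnerProductSpace ℝ V] [CompleteSpace V]

theorem IsCoercive.existsUnique_apply_eq_inner {B : V →L[ℝ] V →L[ℝ] ℝ} (coercive : IsCoercive B)
    (f : V) : ∃! v, ∀ w, B v w = ⟪f, w⟫ := by
  set E := coercive.continuousLinearEquivOfBilin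
  refine ⟨E.symm f, fun w => ?_, fun v hv => ?_⟩
  · rw [← coercive.continuousLinearEquivOfBilin_apply, E.apply_symm_apply]
  · rw [coercive.unique_continuousLinearEquivOfBilin fun w => (hv w).symm, E.symm_apply_apply]

end LaxMilgram

section ShiftedPullbackInner

variable {H V : Type*} [NormedAddCommGroup H] [InnerProductSpace ℝ H]
  [NormedAddCommGroup V] [InnerProductSpace ℝ V]

noncomputable def shiftedPullbackInner (ι : V →L[ℝ] H) (c : ℝ) : V →L[ℝ] V →L[ℝ] ℝ :=
  (innerSL ℝ : H →L[ℝ] H →L[ℝ] ℝ).bilinearComp ι ι + c • innerSL ℝ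

theorem shiftedPullbackInner_apply (ι : V →L[ℝ] H) (c : ℝ) (u w : V) :
    shiftedPullbackInner ι c u w = ⟪ι u, ι w⟫ + c * ⟪u, w⟫ := by
  simp only [shiftedPullbackInner, add_apply, smul_apply, ContinuousLinearMap.bilinearComp_apply,
    innerSL_apply_apply, smul_eq_mul]
  rfl

theorem isCoercive_shiftedPullbackInner (ι : V →L[ℝ] H) {c : ℝ} (hc : 0 < c) :
    IsCoercive (shiftedPullbackInner ι c) := by
  refine ⟨c, hc, fun u => ?_⟩
  rw [shiftedPullbackInner_apply, real_inner_self_eq_norm_mul_norm, real_inner_self_eq_norm_mul_norm,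
    mul_assoc]
  linarith [mul_self_nonneg ‖ι u‖]

end ShiftedPullbackInner

theorem stmt6_general {H V : Type*}
    [NormedAddCommGroup H] [InnerProductSpace ℝ H] [CompleteSpace H]
    [NormedAddCommGroup V] [InnerProductSpace ℝ V] [CompleteSpace V]
    (ι : V →L[ℝ] H)
    (η₀ : V) (v₀ : H) (Δt : ℝ) (hΔt : 0 < Δt) :
    ∃! p : V × V, p.1 = η₀ + Δt • p.2 ∧
      ∀ ψ : V, ⟪ι p.2 - v₀, ι ψ⟫ + Δt * ⟪p.1, ψ⟫ = 0 := by
  set f := ContinuousLinearMap.adjoint ι v₀ - Δt • η₀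
  have equation_iff (v ψ : V) :
      ⟪ι v - v₀, ι ψ⟫ + Δt * ⟪η₀ + Δt • v, ψ⟫ = 0 ↔
        shiftedPullbackInner ι (Δt ^ 2) v ψ = ⟪f, ψ⟫ := by
    rw [shiftedPullbackInner_apply, inner_sub_left, inner_sub_left, inner_add_left,
      real_inner_smul_left, real_inner_smul_left, ContinuousLinearMap.adjoint_inner_left]
    constructor <;> intro h <;> linarith
  rw [existsUnique_prod_fst_eq_iff (fun v => η₀ + Δt • v)
    (fun η v => ∀ ψ, ⟪ι v - v₀, ι ψ⟫ + Δt * ⟪η, ψ⟫ = 0)]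
  simp only [equation_iff]
  exact (isCoercive_shiftedPullbackInner ι (pow_pos hΔt 2)).existsUnique_apply_eq_inner f

/-- Existence and uniqueness for the time-discretized
structure sub-problem: in Hilbert spaces `H`, `V` with a continuous injective
linear map `ι : V → H`, for any data `η⁰ ∈ V`, `v⁰ ∈ H` and `Δt > 0` there is
a unique pair `(η½, v½) ∈ V × V` with `η½ = η⁰ + Δt • v½` and
`⟪ι v½ - v⁰, ι ψ⟫_H + Δt ⟪η½, ψ⟫_V = 0` for all `ψ ∈ V`. -/
theorem stmt6 {H V : Type*}
    [NormedAddCommGroup H] [InnerProductSpace ℝ H] [CompleteSpace H]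
    [NormedAddCommGroup V] [InnerProductSpace ℝ V] [CompleteSpace V]
    (ι : V →L[ℝ] H) (hι : Function.Injective ι)
    (η₀ : V) (v₀ : H) (Δt : ℝ) (hΔt : 0 < Δt) :
    ∃! p : V × V, p.1 = η₀ + Δt • p.2 ∧
      ∀ ψ : V, ⟪ι p.2 - v₀, ι ψ⟫ + Δt * ⟪p.1, ψ⟫ = 0 :=
  stmt6_general ι η₀ v₀ Δt hΔt
end

section
/- Let H and V be real Hilbert spaces and ι : V → H a continuous injective linear map. Suppose η⁰ ∈ V, v⁰ ∈ H, Δt > 0, and (η½, v½) ∈ V × V satisfy η½ = η⁰ + Δt · v½ and ⟨ι v½ − v⁰, ι ψ⟩_H + Δt · ⟨η½, ψ⟩_V = 0 for all ψ ∈ V. Then ‖ι v½‖²_H + ‖ι v½ − v⁰‖²_H + ‖η½‖²_V + ‖η½ − η⁰‖²_V ≤ ‖v⁰‖²_H + ‖η⁰‖²_V. -/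
open RealInnerProductSpace

/-- Semidiscrete energy inequality for the structure
sub-problem: if `ηh = η₀ + Δt • vh` (with `ηh = η^{n+1/2}`, `vh = v^{n+1/2}`)
and `⟪ι vh - v₀, ι ψ⟫_H + Δt ⟪ηh, ψ⟫_V = 0` for all `ψ ∈ V`, then
`‖ι vh‖² + ‖ι vh - v₀‖² + ‖ηh‖² + ‖ηh - η₀‖² ≤ ‖v₀‖² + ‖η₀‖²`. -/
theorem stmt7 {H V : Type*}
    [NormedAddCommGroup H] [InnerProductSpace ℝ H]
    [NormedAddCommGroup V] [InnerProductSpace ℝ V]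
    (ι : V →L[ℝ] H) (hι : Function.Injective ι)
    (η₀ ηh : V) (v₀ : H) (vh : V) (Δt : ℝ) (hΔt : 0 < Δt)
    (heq1 : ηh = η₀ + Δt • vh)
    (heq2 : ∀ ψ : V, ⟪ι vh - v₀, ι ψ⟫ + Δt * ⟪ηh, ψ⟫ = 0) :
    ‖ι vh‖ ^ 2 + ‖ι vh - v₀‖ ^ 2 + ‖ηh‖ ^ 2 + ‖ηh - η₀‖ ^ 2 ≤
      ‖v₀‖ ^ 2 + ‖η₀‖ ^ 2 := by
  have h := heq2 vh
  have hv : Δt • vh = ηh - η₀ := by rw [heq1]; abel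
  have h2 : Δt * ⟪ηh, vh⟫ = ⟪ηh, ηh - η₀⟫ := by
    rw [← hv, real_inner_smul_right]
  rw [h2] at h
  have e1 : ⟪ι vh - v₀, ι vh⟫ =
      (‖ι vh‖ ^ 2 - ‖v₀‖ ^ 2 + ‖ι vh - v₀‖ ^ 2) / 2 := by
    rw [@norm_sub_sq_real, ← real_inner_self_eq_norm_sq (ι vh),
      ← real_inner_self_eq_norm_sq v₀, inner_sub_left, real_inner_comm v₀ (ι vh)]
    ring
  have e2 : ⟪ηh, ηh - η₀⟫ =
      (‖ηh‖ ^ 2 - ‖η₀‖ ^ 2 + ‖ηh - η₀‖ ^ 2) / 2 := by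
    rw [@norm_sub_sq_real, ← real_inner_self_eq_norm_sq ηh,
      ← real_inner_self_eq_norm_sq η₀, inner_sub_right, real_inner_comm η₀ ηh]
    ring
  rw [e1, e2] at h
  linarith
end

section
/- Let E be a normed vector space, T > 0, 0 < α < 1/2, K ≥ 0, C₁ ≥ 0, and a ∈ [0,T]. Let f : (0,T) → E satisfy: ‖f(t)‖ ≤ K for all t ∈ (0,T), t ↦ ‖f(t)‖ is measurable, and ∫₀ᵀ∫₀ᵀ ‖f(t) − f(s)‖²/|t−s|^{1+2α} dt ds ≤ C₁. Let θ := 𝟙_{[0,a)}. Then ∫₀ᵀ∫₀ᵀ ‖θ(t)f(t) − θ(s)f(s)‖²/|t−s|^{1+2α} dt ds ≤ 2C₁ + 2K² · (T² + (2α+1)/(1−2α)). -/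
/-!
With `θ = 𝟙_{(-∞, a)}`, which agrees with `𝟙_{[0, a)}` on `(0, T)`, one has
`‖θ f t - θ f s‖² ≤ ‖f t - f s‖² + K² |θ t - θ s|²`, so the Gagliardo integral of `θ f` is at
most that of `f` plus `K²` times that of `θ`. For `θ`, pairs at distance at least `1` contribute
at most `T²`; a pair `s < a ≤ t` with `t - s < 1` has `t = s + u` with `s ∈ [a - u, a)`, a set of
length `u`, so these pairs contribute `∫₀¹ u^(-1-2α) u du = 1 / (1 - 2α)`, and so do their mirror
images.
-/

open MeasureTheory Set
open scoped ENNReal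

lemma lintegral_Ioo_zero_one_rpow {r : ℝ} (hr : -1 < r) :
    ∫⁻ u in Ioo 0 1, ENNReal.ofReal (u ^ r) = ENNReal.ofReal (1 / (r + 1)) := by
  rw [← ofReal_integral_eq_lintegral_ofReal
    ((intervalIntegral.integrableOn_Ioo_rpow_iff one_pos).2 hr)
    ((ae_restrict_mem measurableSet_Ioo).mono fun u hu => Real.rpow_nonneg hu.1.le r),
    ← integral_Ioc_eq_integral_Ioo, ← intervalIntegral.integral_of_le zero_le_one,
    integral_rpow (Or.inl hr), Real.one_rpow, Real.zero_rpow (by linarith), sub_zero]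

lemma lintegral_lintegral_add_right {β γ : Type*} [MeasurableSpace β] [MeasurableSpace γ]
    {μ : Measure β} {ν : Measure γ} [SFinite ν] (F G : γ → β → ℝ≥0∞)
    (hG : Measurable (Function.uncurry G)) :
    ∫⁻ s, ∫⁻ t, (F t s + G t s) ∂ν ∂μ =
      ∫⁻ s, ∫⁻ t, F t s ∂ν ∂μ + ∫⁻ s, ∫⁻ t, G t s ∂ν ∂μ := by
  rw [lintegral_congr fun s =>
    lintegral_add_right (F · s) (g := (G · s)) (hG.comp measurable_prodMk_right)]
  exact lintegral_add_right _ (hG.comp measurable_swap).lintegral_prod_right'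

noncomputable def gagliardo {E : Type*} [SeminormedAddGroup E] (α : ℝ) (U : Set ℝ)
    (g : ℝ → E) : ℝ≥0∞ :=
  ∫⁻ s in U, ∫⁻ t in U, ENNReal.ofReal (‖g t - g s‖ ^ 2 / |t - s| ^ (1 + 2 * α))

section Indicator

variable {E : Type*} [SeminormedAddGroup E] {α : ℝ} {U : Set ℝ}

lemma gagliardo_congr (hU : MeasurableSet U) {g g' : ℝ → E} (h : EqOn g g' U) :
    gagliardo α U g = gagliardo α U g' :=
  setLIntegral_congr_fun hU fun s hs => setLIntegral_congr_fun hU fun t ht => by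
    simp only [h hs, h ht]

lemma norm_indicator_sub_indicator_sq_le {S : Set ℝ} {f : ℝ → E} {K t s : ℝ}
    (ht : ‖f t‖ ≤ K) (hs : ‖f s‖ ≤ K) :
    ‖S.indicator f t - S.indicator f s‖ ^ 2 ≤
      ‖f t - f s‖ ^ 2 + K ^ 2 * ‖S.indicator (1 : ℝ → ℝ) t - S.indicator 1 s‖ ^ 2 := by
  have ht2 := pow_le_pow_left₀ (norm_nonneg _) ht 2
  have hs2 := pow_le_pow_left₀ (norm_nonneg _) hs 2
  by_cases htS : t ∈ S <;> by_cases hsS : s ∈ S <;>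
    simp only [htS, hsS, indicator_of_mem, indicator_of_notMem, not_false_eq_true, Pi.one_apply,
      sub_self, sub_zero, zero_sub, norm_neg, norm_zero, norm_one, one_pow, mul_one] <;>
    nlinarith [sq_nonneg ‖f t - f s‖]

lemma gagliardo_indicator_le {K : ℝ} {S : Set ℝ} (hS : MeasurableSet S) (hU : MeasurableSet U)
    {f : ℝ → E} (hf : ∀ t ∈ U, ‖f t‖ ≤ K) :
    gagliardo α U (S.indicator f) ≤
      gagliardo α U f + ENNReal.ofReal (K ^ 2) * gagliardo α U (S.indicator (1 : ℝ → ℝ)) := by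
  set θ := S.indicator (1 : ℝ → ℝ)
  have hθ : Measurable θ := measurable_one.indicator hS
  have hmeas : Measurable (Function.uncurry fun t s =>
      ENNReal.ofReal (K ^ 2) * ENNReal.ofReal (‖θ t - θ s‖ ^ 2 / |t - s| ^ (1 + 2 * α))) := by
    fun_prop
  calc gagliardo α U (S.indicator f)
      ≤ ∫⁻ s in U, ∫⁻ t in U,
          (ENNReal.ofReal (‖f t - f s‖ ^ 2 / |t - s| ^ (1 + 2 * α)) +
            ENNReal.ofReal (K ^ 2) * ENNReal.ofReal (‖θ t - θ s‖ ^ 2 / |t - s| ^ (1 + 2 * α))) := by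
        refine setLIntegral_mono' hU fun s hs => setLIntegral_mono' hU fun t ht => ?_
        rw [← ENNReal.ofReal_mul (sq_nonneg K),
          ← ENNReal.ofReal_add (by positivity) (by positivity), mul_div_assoc', ← add_div]
        gcongr
        exact norm_indicator_sub_indicator_sq_le (hf t ht) (hf s hs)
    _ = gagliardo α U f + ENNReal.ofReal (K ^ 2) * gagliardo α U θ := by
        rw [lintegral_lintegral_add_right _ _ hmeas]
        simp_rw [lintegral_const_mul' _ _ ENNReal.ofReal_ne_top]
        rfl

end Indicator

noncomputable def crossingKernel (α a : ℝ) : ℝ × ℝ → ℝ≥0∞ :=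
  {p : ℝ × ℝ | p.2 < a ∧ a ≤ p.1 ∧ p.1 < p.2 + 1}.indicator
    fun p => ENNReal.ofReal ((p.1 - p.2) ^ (-(1 + 2 * α)))

section HalfLine

variable {α a : ℝ}

lemma measurable_crossingKernel : Measurable (crossingKernel α a) :=
  Measurable.indicator (by fun_prop) (by measurability)

lemma lintegral_crossingKernel_add_right (u : ℝ) :
    ∫⁻ s, crossingKernel α a (u + s, s) =
      (Ioo 0 1).indicator (fun u => ENNReal.ofReal (u ^ (-(2 * α)))) u := by
  by_cases hu : u ∈ Ioo 0 1
  · have hslice : (fun s => crossingKernel α a (u + s, s)) =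
        (Ico (a - u) a).indicator fun _ => ENNReal.ofReal (u ^ (-(1 + 2 * α))) := by
      ext s
      have hmem : (u + s, s) ∈ {p : ℝ × ℝ | p.2 < a ∧ a ≤ p.1 ∧ p.1 < p.2 + 1} ↔
          s ∈ Ico (a - u) a := by
        simp only [mem_ofPred_eq, mem_Ico]
        constructor
        · rintro ⟨hsa, hau, -⟩
          exact ⟨by linarith, hsa⟩
        · rintro ⟨hau, hsa⟩
          exact ⟨hsa, by linarith, by linarith [hu.2]⟩
      simp only [crossingKernel, indicator_apply, hmem, add_sub_cancel_right]
    rw [hslice, lintegral_indicator_const measurableSet_Ico, Real.volume_Ico, sub_sub_cancel,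
      ← ENNReal.ofReal_mul (Real.rpow_nonneg hu.1.le _), ← Real.rpow_add_one hu.1.ne',
      indicator_of_mem hu]
    ring_nf
  · rw [indicator_of_notMem hu]
    refine lintegral_eq_zero_of_ae_eq_zero (Filter.Eventually.of_forall fun s => ?_)
    refine indicator_of_notMem (fun h => hu ⟨?_, ?_⟩) _
    · linarith [h.1, h.2.1]
    · linarith [h.2.2]

lemma lintegral_lintegral_crossingKernel (hα : α < 1 / 2) :
    ∫⁻ s, ∫⁻ t, crossingKernel α a (t, s) = ENNReal.ofReal (1 / (1 - 2 * α)) := by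
  calc ∫⁻ s, ∫⁻ t, crossingKernel α a (t, s)
      = ∫⁻ s, ∫⁻ u, crossingKernel α a (u + s, s) := lintegral_congr fun s =>
        (lintegral_add_right_eq_self (fun t => crossingKernel α a (t, s)) s).symm
    _ = ∫⁻ u, ∫⁻ s, crossingKernel α a (u + s, s) :=
        lintegral_lintegral_swap (measurable_crossingKernel.comp (by fun_prop)).aemeasurable
    _ = ∫⁻ u in Ioo 0 1, ENNReal.ofReal (u ^ (-(2 * α))) := by
        simp_rw [lintegral_crossingKernel_add_right, lintegral_indicator measurableSet_Ioo]
    _ = ENNReal.ofReal (1 / (1 - 2 * α)) := by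
        rw [lintegral_Ioo_zero_one_rpow (by linarith), neg_add_eq_sub]

lemma ofReal_one_div_rpow_le_crossingKernel (hα : 0 ≤ α) {t s : ℝ} (hs : s < a) (ht : a ≤ t) :
    ENNReal.ofReal (1 / |t - s| ^ (1 + 2 * α)) ≤ 1 + crossingKernel α a (t, s) := by
  have hts : |t - s| = t - s := abs_of_pos (by linarith)
  by_cases hnear : t < s + 1
  · have hmem : (t, s) ∈ {p : ℝ × ℝ | p.2 < a ∧ a ≤ p.1 ∧ p.1 < p.2 + 1} := ⟨hs, ht, hnear⟩
    rw [crossingKernel, indicator_of_mem hmem, hts, Real.rpow_neg (by linarith), one_div]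
    exact le_add_self
  · refine le_add_right (ENNReal.ofReal_le_one.2 (div_le_one_of_le₀ ?_ (by positivity)))
    exact Real.one_le_rpow (by rw [hts]; linarith) (by linarith)

lemma ofReal_indicator_Iio_kernel_le (hα : 0 ≤ α) (t s : ℝ) :
    ENNReal.ofReal (‖(Iio a).indicator (1 : ℝ → ℝ) t - (Iio a).indicator 1 s‖ ^ 2 /
        |t - s| ^ (1 + 2 * α)) ≤
      1 + crossingKernel α a (t, s) + crossingKernel α a (s, t) := by
  rcases lt_or_ge t a with hta | hta <;> rcases lt_or_ge s a with hsa | hsa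
  · simp [hta, hsa]
  · have hjump : ‖(Iio a).indicator (1 : ℝ → ℝ) t - (Iio a).indicator 1 s‖ ^ 2 = 1 := by
      simp [hta, not_lt.2 hsa]
    rw [hjump, abs_sub_comm, add_right_comm]
    exact (ofReal_one_div_rpow_le_crossingKernel hα hta hsa).trans le_self_add
  · have hjump : ‖(Iio a).indicator (1 : ℝ → ℝ) t - (Iio a).indicator 1 s‖ ^ 2 = 1 := by
      simp [hsa, not_lt.2 hta]
    rw [hjump]
    exact (ofReal_one_div_rpow_le_crossingKernel hα hsa hta).trans le_self_add
  · simp [not_lt.2 hta, not_lt.2 hsa]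

lemma gagliardo_indicator_Iio_le (hα₀ : 0 ≤ α) (hα : α < 1 / 2) (U : Set ℝ) :
    gagliardo α U ((Iio a).indicator (1 : ℝ → ℝ)) ≤
      volume U ^ 2 + ENNReal.ofReal (2 / (1 - 2 * α)) := by
  have hrestrict (F : ℝ → ℝ → ℝ≥0∞) : ∫⁻ s in U, ∫⁻ t in U, F t s ≤ ∫⁻ s, ∫⁻ t, F t s :=
    lintegral_mono' Measure.restrict_le_self fun s =>
      lintegral_mono' Measure.restrict_le_self le_rfl
  have hk := lintegral_lintegral_crossingKernel (a := a) hα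
  have hmeas : Measurable (Function.uncurry fun t s => crossingKernel α a (t, s)) :=
    measurable_crossingKernel
  have hmeas_swap : Measurable (Function.uncurry fun t s => crossingKernel α a (s, t)) :=
    measurable_crossingKernel.comp measurable_swap
  calc gagliardo α U ((Iio a).indicator (1 : ℝ → ℝ))
      ≤ ∫⁻ s in U, ∫⁻ t in U,
          (1 + crossingKernel α a (t, s) + crossingKernel α a (s, t)) :=
        lintegral_mono fun s => lintegral_mono fun t => ofReal_indicator_Iio_kernel_le hα₀ t s
    _ = (∫⁻ s in U, ∫⁻ t in U, 1) + (∫⁻ s in U, ∫⁻ t in U, crossingKernel α a (t, s)) +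
          ∫⁻ s in U, ∫⁻ t in U, crossingKernel α a (s, t) := by
        rw [lintegral_lintegral_add_right _ _ hmeas_swap, lintegral_lintegral_add_right _ _ hmeas]
    _ ≤ volume U ^ 2 + ENNReal.ofReal (1 / (1 - 2 * α)) + ENNReal.ofReal (1 / (1 - 2 * α)) := by
        gcongr
        · simp [sq]
        · exact (hrestrict _).trans hk.le
        · refine (hrestrict _).trans ?_
          rw [lintegral_lintegral_swap hmeas.aemeasurable, hk]
    _ = volume U ^ 2 + ENNReal.ofReal (2 / (1 - 2 * α)) := by
        have hpos : 0 ≤ 1 / (1 - 2 * α) := one_div_nonneg.2 (by linarith)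
        rw [add_assoc, ← ENNReal.ofReal_add hpos hpos, ← add_div, one_add_one_eq_two]

end HalfLine

theorem stmt18_general {E : Type*} [NormedAddCommGroup E]
    (T α K C₁ a : ℝ) (hT : 0 < T) (hα1 : 0 < α) (hα2 : α < 1 / 2)
    (hC₁ : 0 ≤ C₁)
    (f : ℝ → E)
    (hfb : ∀ t ∈ Set.Ioo (0 : ℝ) T, ‖f t‖ ≤ K)
    (hgag : ∫⁻ s in Set.Ioo (0 : ℝ) T, ∫⁻ t in Set.Ioo (0 : ℝ) T,
        ENNReal.ofReal (‖f t - f s‖ ^ 2 / |t - s| ^ (1 + 2 * α)) ≤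
      ENNReal.ofReal C₁) :
    ∫⁻ s in Set.Ioo (0 : ℝ) T, ∫⁻ t in Set.Ioo (0 : ℝ) T,
        ENNReal.ofReal
          (‖(Set.Ico (0 : ℝ) a).indicator f t -
              (Set.Ico (0 : ℝ) a).indicator f s‖ ^ 2 /
            |t - s| ^ (1 + 2 * α)) ≤
      ENNReal.ofReal (2 * C₁ + 2 * K ^ 2 * (T ^ 2 + (2 * α + 1) / (1 - 2 * α))) := by
  have hU : MeasurableSet (Ioo 0 T) := measurableSet_Ioo
  have hθ : EqOn ((Ico 0 a).indicator f) ((Iio a).indicator f) (Ioo 0 T) := fun t ht => by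
    simp [indicator_apply, ht.1.le]
  have hβ : 0 < 1 - 2 * α := by linarith
  have hslack : 2 / (1 - 2 * α) ≤ 2 * ((2 * α + 1) / (1 - 2 * α)) := by
    rw [mul_div_assoc']
    exact div_le_div_of_nonneg_right (by linarith) hβ.le
  calc gagliardo α (Ioo 0 T) ((Ico 0 a).indicator f)
      = gagliardo α (Ioo 0 T) ((Iio a).indicator f) := gagliardo_congr hU hθ
    _ ≤ gagliardo α (Ioo 0 T) f +
          ENNReal.ofReal (K ^ 2) * gagliardo α (Ioo 0 T) ((Iio a).indicator 1) :=
        gagliardo_indicator_le measurableSet_Iio hU hfb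
    _ ≤ ENNReal.ofReal C₁ +
          ENNReal.ofReal (K ^ 2) * ENNReal.ofReal (T ^ 2 + 2 / (1 - 2 * α)) := by
        gcongr
        · exact hgag
        · rw [ENNReal.ofReal_add (by positivity) (by positivity), ENNReal.ofReal_pow hT.le]
          simpa using gagliardo_indicator_Iio_le hα1.le hα2 (Ioo 0 T)
    _ ≤ _ := by
        rw [← ENNReal.ofReal_mul (sq_nonneg K), ← ENNReal.ofReal_add hC₁ (by positivity)]
        refine ENNReal.ofReal_le_ofReal ?_
        nlinarith [mul_le_mul_of_nonneg_left hslack (sq_nonneg K), sq_nonneg (K * T)]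

/-- Gagliardo seminorm bound for the truncated function
`θ f`, `θ = 𝟙_{[0,a)}`: if `‖f‖ ≤ K` on `(0,T)` and the Gagliardo double
integral of `f` is at most `C₁`, then that of `θ f` is at most
`2C₁ + 2K² (T² + (2α+1)/(1-2α))`. -/
theorem stmt18 {E : Type*} [NormedAddCommGroup E]
    (T α K C₁ a : ℝ) (hT : 0 < T) (hα1 : 0 < α) (hα2 : α < 1 / 2)
    (hK : 0 ≤ K) (hC₁ : 0 ≤ C₁) (ha : a ∈ Set.Icc 0 T)
    (f : ℝ → E)
    (hfb : ∀ t ∈ Set.Ioo (0 : ℝ) T, ‖f t‖ ≤ K)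
    (hfm : Measurable fun t => ‖f t‖)
    (hgag : ∫⁻ s in Set.Ioo (0 : ℝ) T, ∫⁻ t in Set.Ioo (0 : ℝ) T,
        ENNReal.ofReal (‖f t - f s‖ ^ 2 / |t - s| ^ (1 + 2 * α)) ≤
      ENNReal.ofReal C₁) :
    ∫⁻ s in Set.Ioo (0 : ℝ) T, ∫⁻ t in Set.Ioo (0 : ℝ) T,
        ENNReal.ofReal
          (‖(Set.Ico (0 : ℝ) a).indicator f t -
              (Set.Ico (0 : ℝ) a).indicator f s‖ ^ 2 /
            |t - s| ^ (1 + 2 * α)) ≤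
      ENNReal.ofReal (2 * C₁ + 2 * K ^ 2 * (T ^ 2 + (2 * α + 1) / (1 - 2 * α))) :=
  stmt18_general T α K C₁ a hT hα1 hα2 hC₁ f hfb hgag
end
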